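/- arXiv:math/0202090 — 4 statements merged into one kernel-verified Lean document; each statement's English description precedes it below -/
import Mathlib

section
/- Let w ∈ Σ_n, let R ∈ R(w) be an rc-graph associated to w, and let R = R₀ ⊂ R₁ ⊂ ⋯ ⊂ R_m (m = ℓ(w₀)−ℓ(w)) be the greedy sequence obtained by repeatedly adjoining the lexicographically smallest missing pair. Then every R_i in this sequence is an rc-graph, i.e. d(R_i) is a reduced word for some permutation in Σ_n. -/
open MvPolynomial

noncomputable section

/-- The symmetric group `Σ_n` on `{0, …, n-1}` (0-indexed model of `{1, …, n}`). -/
abbrev Perm' (n : ℕ) := Equiv.Perm (Fin n)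

/-- The length `ℓ(w)`: the number of inversions of `w`. -/
def invLength {n : ℕ} (w : Perm' n) : ℕ :=
  (Finset.univ.filter (fun p : Fin n × Fin n => p.1 < p.2 ∧ w p.2 < w p.1)).card

/-- The longest permutation `w₀ = n … 2 1`. -/
def w0 (n : ℕ) : Perm' n := Fin.revPerm

/-- `u ⋖ w` in the Bruhat order: `w = u·(k,l)` where `k < l`, `u k < u l`, and no
position strictly between `k` and `l` has a `u`-value between `u k` and `u l`. -/
def BruhatCover {n : ℕ} (u w : Perm' n) : Prop :=
  ∃ k l : Fin n, k < l ∧ u k < u l ∧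
    (∀ i : Fin n, k < i → i < l → ¬(u k < u i ∧ u i < u l)) ∧
    w = u * Equiv.swap k l

/-- The Bruhat order, generated by its covers. -/
def BruhatLE {n : ℕ} : Perm' n → Perm' n → Prop :=
  Relation.ReflTransGen BruhatCover

/-- `u →^{(k,b)} w` is a labeled cover in the labeled Bruhat order (0-indexed):
`u ⋖ w` with `u⁻¹w = (i,j)`, `i ≤ k < j` and `b = u i`. -/
def IsLabeledCover {n : ℕ} (u w : Perm' n) (k b : ℕ) : Prop :=
  ∃ i j : Fin n, i < j ∧ u i < u j ∧
    (∀ m : Fin n, i < m → m < j → ¬(u i < u m ∧ u m < u j)) ∧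
    w = u * Equiv.swap i j ∧ (i : ℕ) ≤ k ∧ k < (j : ℕ) ∧ b = (u i : ℕ)

/-- Strict lexicographic order on labels `(k,b)`. -/
def lexLt (p q : ℕ × ℕ) : Prop := p.1 < q.1 ∨ (p.1 = q.1 ∧ p.2 < q.2)

/-- A saturated labeled chain of length `m` from `u` to `w` in the labeled Bruhat order. -/
structure LabeledChain (n m : ℕ) (u w : Perm' n) where
  c : Fin (m + 1) → Perm' n
  lab : Fin m → ℕ × ℕ
  c_zero : c 0 = u
  c_last : c (Fin.last m) = w
  step : ∀ i : Fin m, IsLabeledCover (c i.castSucc) (c i.succ) (lab i).1 (lab i).2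

/-- A chain is increasing if its labels strictly increase in lexicographic order. -/
def LabeledChain.Increasing {n m : ℕ} {u w : Perm' n} (γ : LabeledChain n m u w) : Prop :=
  ∀ i j : Fin m, i < j → lexLt (γ.lab i) (γ.lab j)

/-- The type of a chain: `α_k` counts labels with first coordinate `k`. -/
def chainType {n m : ℕ} {u w : Perm' n} (γ : LabeledChain n m u w) : Fin n → ℕ :=
  fun k => (Finset.univ.filter (fun i : Fin m => (γ.lab i).1 = (k : ℕ))).card

/-- `I_α(u,w)`: the number of increasing chains from `u` to `w` of type `α`. -/
def incChainCount (n : ℕ) (u w : Perm' n) (α : Fin n → ℕ) : ℕ :=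
  Nat.card ((m : ℕ) × {γ : LabeledChain n m u w // γ.Increasing ∧ chainType γ = α})

/-- The staircase monomial `x^δ = x₁^{n-1} x₂^{n-2} ⋯ x_{n-1}`. -/
def xDelta (n : ℕ) : MvPolynomial (Fin n) ℤ :=
  ∏ i : Fin n, X i ^ (n - 1 - (i : ℕ))

/-- `S` is the family of Schubert polynomials: `S w₀ = x^δ` and
`S w - s_i·(S w) = (x_i - x_{i+1}) · S (w s_i)` whenever `ℓ(w s_i) < ℓ(w)`. -/
def IsSchubertFamily (n : ℕ) (S : Perm' n → MvPolynomial (Fin n) ℤ) : Prop :=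
  S (w0 n) = xDelta n ∧
  ∀ (w : Perm' n) (i : ℕ) (h : i + 1 < n),
    invLength (w * Equiv.swap (⟨i, by omega⟩ : Fin n) ⟨i + 1, h⟩) < invLength w →
    S w - rename (Equiv.swap (⟨i, by omega⟩ : Fin n) ⟨i + 1, h⟩) (S w) =
      (X (⟨i, by omega⟩ : Fin n) - X ⟨i + 1, h⟩) *
        S (w * Equiv.swap (⟨i, by omega⟩ : Fin n) ⟨i + 1, h⟩)

/-- The ideal generated by the elementary symmetric polynomials `e₁, …, e_n`. -/
def symIdeal (n : ℕ) : Ideal (MvPolynomial (Fin n) ℤ) :=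
  Ideal.span ((fun k => esymm (Fin n) ℤ k) '' Set.Icc 1 n)

/-- `g` is the normal form of `f` modulo the ideal of elementary symmetric polynomials :
`f ≡ g` and every monomial of `g` divides `x^δ`.  (For the degree reverse lexicographic
term order with `x₁ < ⋯ < x_n`, the normal form is exactly the unique such `g`.) -/
def IsNormalForm (n : ℕ) (f g : MvPolynomial (Fin n) ℤ) : Prop :=
  f - g ∈ symIdeal n ∧ ∀ d ∈ g.support, ∀ i : Fin n, d i ≤ n - 1 - (i : ℕ)

def finSubEquiv {n N : ℕ} (h : n ≤ N) : Fin n ≃ {i : Fin N // (i : ℕ) < n} where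
  toFun i := ⟨Fin.castLE h i, i.isLt⟩
  invFun j := ⟨(j.1 : ℕ), j.2⟩
  left_inv i := rfl
  right_inv j := rfl

/-- The standard inclusion `Σ_n ⊂ Σ_N`, extending a permutation by fixed points. -/
def permIncl {n N : ℕ} (h : n ≤ N) (u : Perm' n) : Perm' N :=
  u.extendDomain (finSubEquiv h)

/-- `δ` as an exponent vector. -/
def deltaF (n : ℕ) : Fin n →₀ ℕ :=
  Finsupp.equivFunOnFinite.symm fun i => n - 1 - (i : ℕ)

/-- The type of a chain as an exponent vector. -/
def chainTypeF {n m : ℕ} {u w : Perm' n} (γ : LabeledChain n m u w) : Fin n →₀ ℕ :=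
  Finsupp.equivFunOnFinite.symm (chainType γ)

/-- `δ` as an integral exponent vector. -/
def deltaZ (n : ℕ) : Fin n →₀ ℤ :=
  Finsupp.equivFunOnFinite.symm fun i => ((n - 1 - (i : ℕ) : ℕ) : ℤ)

/-- The type of a chain as an integral exponent vector. -/
def chainTypeZ {n m : ℕ} {u w : Perm' n} (γ : LabeledChain n m u w) : Fin n →₀ ℤ :=
  Finsupp.equivFunOnFinite.symm fun k => ((chainType γ k : ℕ) : ℤ)

/-- The inclusion of polynomials into Laurent polynomials. -/
def toLaurent (n : ℕ) : MvPolynomial (Fin n) ℤ →+* AddMonoidAlgebra ℤ (Fin n →₀ ℤ) :=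
  AddMonoidAlgebra.mapDomainRingHom ℤ (Finsupp.mapRange.addMonoidHom (Nat.castAddMonoidHom ℤ))

/-- The complete homogeneous symmetric polynomial `h_a(x₁, …, x_k)` inside
`ℤ[x₁, …, x_n]` (variables are 0-indexed, so the first `k` variables are used). -/
def hpoly (n k a : ℕ) : MvPolynomial (Fin n) ℤ :=
  ∑ s ∈ (Finset.univ.filter (fun i : Fin n => (i : ℕ) < k)).sym a,
    ((s : Multiset (Fin n)).map X).prod

/-- `h_α = h_{α₁}(x₁) h_{α₂}(x₁,x₂) ⋯ h_{α_{n-1}}(x₁, …, x_{n-1})` (0-indexed `α`). -/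
def hAlpha (n : ℕ) (α : Fin n → ℕ) : MvPolynomial (Fin n) ℤ :=
  ∏ i : Fin n, hpoly n ((i : ℕ) + 1) (α i)

/- ## rc-graphs (0-indexed pairs: the paper's pair `(k,b)` is `(k-1, b-1)`) -/

/-- The linear order on rc-graph positions: `(k,b) ≤ (j,a)  ⇔  k < j, or k = j and b ≥ a`. -/
def rcLE (p q : ℕ × ℕ) : Prop := p.1 < q.1 ∨ (p.1 = q.1 ∧ q.2 ≤ p.2)

instance : DecidableRel rcLE := fun p q => by unfold rcLE; exact inferInstance
instance : IsTrans (ℕ × ℕ) rcLE :=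
  ⟨fun a b c h1 h2 => by unfold rcLE at h1 h2 ⊢; omega⟩
instance : IsAntisymm (ℕ × ℕ) rcLE :=
  ⟨fun a b h1 h2 => by unfold rcLE at h1 h2; rw [Prod.ext_iff]; omega⟩
instance : IsTotal (ℕ × ℕ) rcLE := ⟨fun a b => by unfold rcLE; omega⟩

/-- The adjacent transposition `s_{i+1} = (i, i+1)` (0-indexed positions). -/
def adjT (n : ℕ) (i : ℕ) : Perm' n :=
  if h : i + 1 < n then Equiv.swap ⟨i, by omega⟩ ⟨i + 1, h⟩ else 1

/-- The word `d(R)` of a set of positions: list its elements in the order `rcLE` and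
record `k + b` for each pair (0-indexed version of `k + b - 1`). -/
def rcWord (R : Finset (ℕ × ℕ)) : List ℕ :=
  (R.sort rcLE).map (fun p => p.1 + p.2)

/-- The permutation given by a word in the adjacent transpositions. -/
def wordPerm (n : ℕ) (l : List ℕ) : Perm' n :=
  (l.map (adjT n)).prod

/-- The permutation of a set of rc-positions. -/
def rcPerm (n : ℕ) (R : Finset (ℕ × ℕ)) : Perm' n := wordPerm n (rcWord R)

/-- `R` consists of valid rc-positions: (0-indexed) `k + b + 2 ≤ n`. -/
def IsRC (n : ℕ) (R : Finset (ℕ × ℕ)) : Prop := ∀ p ∈ R, p.1 + p.2 + 2 ≤ n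

/-- `R ∈ 𝓡(w)`: `R` is an rc-graph associated to `w`, i.e. `d(R)` is a reduced word for `w`. -/
def AssocRC (n : ℕ) (R : Finset (ℕ × ℕ)) (w : Perm' n) : Prop :=
  IsRC n R ∧ rcPerm n R = w ∧ R.card = invLength w

/-- All valid rc-positions for `Σ_n`. -/
def fullRC (n : ℕ) : Finset (ℕ × ℕ) :=
  (Finset.range n ×ˢ Finset.range n).filter (fun p => p.1 + p.2 + 2 ≤ n)

/-- One greedy step: adjoin the lexicographically smallest valid pair not in `R`. -/
def GreedyStep (n : ℕ) (R R' : Finset (ℕ × ℕ)) : Prop :=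
  ∃ p : ℕ × ℕ, p ∉ R ∧ p.1 + p.2 + 2 ≤ n ∧
    (∀ q : ℕ × ℕ, q.1 + q.2 + 2 ≤ n → q ∉ R → (p.1 < q.1 ∨ (p.1 = q.1 ∧ p.2 ≤ q.2))) ∧
    R' = insert p R

/-- The exponent of `x_i` in `x^R`. -/
def rcType (n : ℕ) (R : Finset (ℕ × ℕ)) : Fin n → ℕ :=
  fun i => (R.filter (fun p => p.1 = (i : ℕ))).card

/-- `γ = γ(R)`: the chain `γ` is produced from `R` by the greedy sequence. -/
def GreedyRel (n : ℕ) {m : ℕ} (w : Perm' n) (R : Finset (ℕ × ℕ))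
    (γ : LabeledChain n m w (w0 n)) : Prop :=
  ∃ Rs : ℕ → Finset (ℕ × ℕ), Rs 0 = R ∧
    (∀ i < m, GreedyStep n (Rs i) (Rs (i + 1))) ∧
    (∀ i : Fin m, γ.lab i ∉ Rs (i : ℕ) ∧ Rs ((i : ℕ) + 1) = insert (γ.lab i) (Rs (i : ℕ))) ∧
    (∀ i : Fin (m + 1), rcPerm n (Rs (i : ℕ)) = γ.c i)

/-!
Let `p = (k, b)` be the cell added by a greedy step. The word `d(R)` lists the cells row by
row, so it factors as `d(R) = d(L) d(U)` into the cells before and after `p`, and adding `p`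
inserts the letter `k + b` between the two halves. With `u, v` the permutations of `d(L), d(U)`,
the new permutation is `u s_{k+b} v = (u v) (k q)`, where `(k q) = v⁻¹ s_{k+b} v`. Greedy
minimality means that rows `< k` are full and row `k` is full up to column `b`; this forces
`v k = k + b`, so `k < q`, and `u (k+b) < u (k+b+1)`, i.e. `(u v) k < (u v) q`. Right
multiplication by such a transposition strictly increases the number of inversions, while a word
of length `|R| + 1` has at most `|R| + 1` inversions, so the word stays reduced.
-/

section Inversions

variable {n : ℕ}

def invSet (x : Perm' n) : Finset (Fin n × Fin n) :=
  Finset.univ.filter (fun p => p.1 < p.2 ∧ x p.2 < x p.1)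

theorem mem_invSet {x : Perm' n} {p : Fin n × Fin n} :
    p ∈ invSet x ↔ p.1 < p.2 ∧ x p.2 < x p.1 := by
  simp [invSet]

theorem invLength_eq_card_invSet (x : Perm' n) : invLength x = (invSet x).card := rfl

theorem invLength_one : invLength (1 : Perm' n) = 0 := by
  rw [invLength, Finset.card_eq_zero, Finset.filter_eq_empty_iff]
  exact fun _ _ h => lt_asymm h.1 h.2

theorem swap_lt_swap_of_succ_eq {a b c d : Fin n} (hab : (a : ℕ) + 1 = b) (hcd : c < d)
    (hne : (c, d) ≠ (a, b)) : Equiv.swap a b c < Equiv.swap a b d := by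
  simp only [ne_eq, Prod.mk.injEq, Fin.ext_iff, Fin.lt_def] at hcd hne
  simp only [Equiv.swap_apply_def, Fin.ext_iff, Fin.lt_def]
  split_ifs <;> omega

theorem card_erase_invSet_mul_swap_le {a b : Fin n} (hab : (a : ℕ) + 1 = b) (x : Perm' n) :
    ((invSet (x * Equiv.swap a b)).erase (a, b)).card ≤ ((invSet x).erase (a, b)).card := by
  set s := Equiv.swap a b
  refine Finset.card_le_card_of_injOn (Prod.map s s) (fun p hp => ?_)
    (s.injective.prodMap s.injective).injOn
  simp only [Finset.mem_coe, Finset.mem_erase, mem_invSet, Equiv.Perm.mul_apply, Prod.map_fst,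
    Prod.map_snd] at hp ⊢
  obtain ⟨hne, hlt, hinv⟩ := hp
  refine ⟨fun h => ?_, swap_lt_swap_of_succ_eq hab hlt hne, by simpa [s] using hinv⟩
  simp only [Prod.map, Prod.mk.injEq, s, Equiv.swap_apply_eq_iff, Equiv.swap_apply_left,
    Equiv.swap_apply_right] at h
  rw [h.1, h.2, Fin.lt_def] at hlt
  omega

theorem card_erase_invSet_mul_swap {a b : Fin n} (hab : (a : ℕ) + 1 = b) (x : Perm' n) :
    ((invSet (x * Equiv.swap a b)).erase (a, b)).card = ((invSet x).erase (a, b)).card := by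
  refine (card_erase_invSet_mul_swap_le hab x).antisymm ?_
  simpa [mul_assoc] using card_erase_invSet_mul_swap_le hab (x * Equiv.swap a b)

theorem invLength_mul_swap_le {a b : Fin n} (hab : (a : ℕ) + 1 = b) (x : Perm' n) :
    invLength (x * Equiv.swap a b) ≤ invLength x + 1 := by
  have h₁ := Finset.pred_card_le_card_erase (s := invSet (x * Equiv.swap a b)) (a := (a, b))
  have h₂ := Finset.card_erase_le (s := invSet x) (a := (a, b))
  rw [card_erase_invSet_mul_swap hab] at h₁
  rw [invLength_eq_card_invSet, invLength_eq_card_invSet]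
  omega

theorem invLength_mul_swap_of_lt {a b : Fin n} (hab : (a : ℕ) + 1 = b) {x : Perm' n}
    (hx : x a < x b) : invLength (x * Equiv.swap a b) = invLength x + 1 := by
  have hab' : a < b := by rw [Fin.lt_def]; omega
  have hmem : (a, b) ∈ invSet (x * Equiv.swap a b) := by simp [mem_invSet, hab', hx]
  have hnmem : (a, b) ∉ invSet x := by simp [mem_invSet, hx.le]
  rw [invLength_eq_card_invSet, invLength_eq_card_invSet, ← Finset.card_erase_add_one hmem,
    card_erase_invSet_mul_swap hab, Finset.erase_eq_of_notMem hnmem]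

theorem invLength_lt_mul_swap {x : Perm' n} {p q : Fin n} (hpq : p < q) (hx : x p < x q) :
    invLength x < invLength (x * Equiv.swap p q) := by
  obtain ⟨d, hd⟩ : ∃ d, (q : ℕ) = p + 1 + d := ⟨q - p - 1, by rw [Fin.lt_def] at hpq; omega⟩
  induction d generalizing x q with
  | zero => rw [invLength_mul_swap_of_lt hd.symm hx]; omega
  | succ d ih =>
    set r : Fin n := ⟨p + 1 + d, by omega⟩
    have hrq : (r : ℕ) + 1 = q := by simp only [r]; omega
    have hpr : p < r := by simp only [r, Fin.lt_def]; omega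
    have hrq' : r ≠ q := by simp only [r, ne_eq, Fin.ext_iff]; omega
    set s := Equiv.swap r q
    have hsp : s p = p := Equiv.swap_apply_of_ne_of_ne hpr.ne hpq.ne
    -- `(p q) = s (p r) s`, so `x (p q) = z s` with `z = x s (p r)` one step up from `x s`.
    have hz : x * Equiv.swap p q = x * s * Equiv.swap p r * s := by
      have h := Equiv.swap_apply_apply s p r
      rw [hsp, Equiv.swap_apply_left, Equiv.swap_inv] at h
      rw [h]; simp only [mul_assoc]; rfl
    set z := x * s * Equiv.swap p r
    have hxs : invLength (x * s) < invLength z :=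
      ih hpr (by simpa [s, hsp, Equiv.swap_apply_left] using hx) rfl
    have hzr : z r = x p := by simp [z, s, hsp]
    have hzq : z q = x r := by
      simp [z, s, Equiv.swap_apply_of_ne_of_ne hpq.ne' hrq'.symm]
    rw [hz]
    rcases lt_or_gt_of_ne (x.injective.ne hpr.ne) with h | h
    · have h₁ : invLength (z * s) = invLength z + 1 :=
        invLength_mul_swap_of_lt hrq (by rwa [hzr, hzq])
      have h₂ : invLength x ≤ invLength (x * s) + 1 := by
        simpa [s, mul_assoc] using invLength_mul_swap_le hrq (x * s)
      omega
    · have h₁ : invLength (x * s) = invLength x + 1 := invLength_mul_swap_of_lt hrq (h.trans hx)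
      have h₂ : invLength z ≤ invLength (z * s) + 1 := by
        simpa [s, mul_assoc] using invLength_mul_swap_le hrq (z * s)
      omega

end Inversions

section Words

variable {n : ℕ}

theorem adjT_apply_of_lt {a : ℕ} {x : Fin n} (hx : (x : ℕ) < a) : adjT n a x = x := by
  unfold adjT
  split_ifs
  · exact Equiv.swap_apply_of_ne_of_ne (by simp [Fin.ext_iff]; omega)
      (by simp [Fin.ext_iff]; omega)
  · rfl

@[simp]
theorem wordPerm_nil : wordPerm n [] = 1 := rfl

@[simp]
theorem wordPerm_cons (a : ℕ) (l : List ℕ) : wordPerm n (a :: l) = adjT n a * wordPerm n l := by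
  simp [wordPerm]

@[simp]
theorem wordPerm_append (l₁ l₂ : List ℕ) :
    wordPerm n (l₁ ++ l₂) = wordPerm n l₁ * wordPerm n l₂ := by
  simp [wordPerm]

theorem invLength_wordPerm_le (l : List ℕ) : invLength (wordPerm n l) ≤ l.length := by
  induction l using List.reverseRecOn with
  | nil => simp [invLength_one]
  | append_singleton l a ih =>
    have h : invLength (wordPerm n l * adjT n a) ≤ invLength (wordPerm n l) + 1 := by
      unfold adjT
      split_ifs
      · exact invLength_mul_swap_le rfl _
      · simp
    simp only [wordPerm_append, wordPerm_cons, wordPerm_nil, mul_one, List.length_append,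
      List.length_singleton]
    omega

theorem wordPerm_apply_of_forall_lt {l : List ℕ} {x : Fin n} (hl : ∀ a ∈ l, (x : ℕ) < a) :
    wordPerm n l x = x := by
  induction l with
  | nil => rfl
  | cons a l ih =>
    simp only [List.mem_cons, forall_eq_or_imp] at hl
    rw [wordPerm_cons, Equiv.Perm.mul_apply, ih hl.2, adjT_apply_of_lt hl.1]

theorem lt_wordPerm_apply {l : List ℕ} {K : ℕ} {x : Fin n} (hl : ∀ a ∈ l, K < a)
    (hx : K < x) : K < wordPerm n l x := by
  by_contra! h
  have hfix := wordPerm_apply_of_forall_lt fun a ha => h.trans_lt (hl a ha)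
  rw [(wordPerm n l).injective hfix] at h
  omega

def rowWord (j b : ℕ) : List ℕ := (List.range b).reverse.map (j + ·)

theorem rowWord_succ (j b : ℕ) : rowWord j (b + 1) = (j + b) :: rowWord j b := by
  simp [rowWord, List.range_succ]

theorem wordPerm_rowWord_apply {j b : ℕ} (h : j + b < n) (x : Fin n) :
    (wordPerm n (rowWord j b) x : ℕ) =
      if (x : ℕ) = j then j + b else if j < x ∧ x ≤ j + b then x - 1 else x := by
  induction b with
  | zero =>
    simp only [rowWord, List.range_zero, List.reverse_nil, List.map_nil, wordPerm_nil,
      Equiv.Perm.one_apply]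
    split_ifs <;> omega
  | succ b ih =>
    rw [rowWord_succ, wordPerm_cons, Equiv.Perm.mul_apply, adjT, dif_pos (by omega)]
    have hy := ih (by omega)
    generalize wordPerm n (rowWord j b) x = y at hy
    rw [Equiv.swap_apply_def]
    simp only [Fin.ext_iff, apply_ite Fin.val]
    split_ifs at hy ⊢ <;> omega

end Words

theorem Finset.sort_union_of_forall_rel {α : Type*} [DecidableEq α] (r : α → α → Prop)
    [DecidableRel r] [IsTrans α r] [Std.Antisymm r] [Std.Total r] {s t : Finset α}
    (hst : Disjoint s t) (h : ∀ a ∈ s, ∀ b ∈ t, r a b) :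
    (s ∪ t).sort r = s.sort r ++ t.sort r := by
  refine List.Perm.eq_of_pairwise' (Finset.pairwise_sort _ _)
    (List.pairwise_append.2 ⟨Finset.pairwise_sort _ _, Finset.pairwise_sort _ _,
      fun a ha b hb => h a ((Finset.mem_sort r).1 ha) b ((Finset.mem_sort r).1 hb)⟩) ?_
  rw [← Multiset.coe_eq_coe, ← Multiset.coe_add, Finset.sort_eq, Finset.sort_eq, Finset.sort_eq,
    ← Finset.disjUnion_eq_union s t hst, Finset.disjUnion_val]

section RCWords

variable {n : ℕ}

@[simp]
theorem mem_rcWord {X : Finset (ℕ × ℕ)} {a : ℕ} : a ∈ rcWord X ↔ ∃ p ∈ X, p.1 + p.2 = a := by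
  simp [rcWord]

theorem length_rcWord (X : Finset (ℕ × ℕ)) : (rcWord X).length = X.card := by
  simp [rcWord]

theorem invLength_rcPerm_le_card (X : Finset (ℕ × ℕ)) : invLength (rcPerm n X) ≤ X.card :=
  length_rcWord X ▸ invLength_wordPerm_le _

theorem rcWord_singleton (p : ℕ × ℕ) : rcWord {p} = [p.1 + p.2] := by
  simp [rcWord]

theorem rcWord_union {X Y : Finset (ℕ × ℕ)} (hXY : Disjoint X Y)
    (h : ∀ p ∈ X, ∀ q ∈ Y, rcLE p q) : rcWord (X ∪ Y) = rcWord X ++ rcWord Y := by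
  rw [rcWord, Finset.sort_union_of_forall_rel rcLE hXY h, List.map_append, rcWord, rcWord]

theorem rcWord_eq_filter_append (X : Finset (ℕ × ℕ)) (f : ℕ × ℕ → Prop) [DecidablePred f]
    (h : ∀ p ∈ X, ∀ q ∈ X, f p → ¬ f q → rcLE p q) :
    rcWord X = rcWord (X.filter f) ++ rcWord (X.filter (¬ f ·)) := by
  rw [← rcWord_union (Finset.disjoint_filter_filter_not X X f),
    Finset.filter_union_filter_not_eq]
  simp only [Finset.mem_filter]
  exact fun p hp q hq => h p hp.1 q hq.1 hp.2 hq.2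

theorem rcWord_row (j b : ℕ) : rcWord ({j} ×ˢ Finset.range b) = rowWord j b := by
  induction b with
  | zero => simp [rcWord, rowWord]
  | succ b ih =>
    have hrow : {j} ×ˢ Finset.range (b + 1) = {(j, b)} ∪ {j} ×ˢ Finset.range b := by
      ext q
      simp only [Finset.mem_union, Finset.mem_product, Finset.mem_singleton, Finset.mem_range,
        Prod.ext_iff]
      omega
    rw [hrow, rcWord_union, rcWord_singleton, ih, rowWord_succ]
    · rfl
    · simp
    · simp only [Finset.mem_singleton, Finset.mem_product, Finset.mem_range, rcLE]
      rintro p rfl q ⟨hq, hqb⟩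
      omega

def fullRows (n k : ℕ) : Finset (ℕ × ℕ) := (fullRC n).filter (·.1 < k)

theorem mem_fullRows {k : ℕ} {q : ℕ × ℕ} : q ∈ fullRows n k ↔ q.1 < k ∧ q.1 + q.2 + 2 ≤ n := by
  simp only [fullRows, fullRC, Finset.mem_filter, Finset.mem_product, Finset.mem_range]
  omega

-- Each full row `j` acts as `x ↦ x - 1` on positions `x > j`.
theorem wordPerm_rcWord_fullRows_apply (k : ℕ) (x : Fin n) (hx : k ≤ x) :
    (wordPerm n (rcWord (fullRows n k)) x : ℕ) = x - k := by
  induction k generalizing x with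
  | zero =>
    have : fullRows n 0 = ∅ := by ext q; simp [mem_fullRows]
    simp [this, rcWord]
  | succ k ih =>
    have hsplit := rcWord_eq_filter_append (fullRows n (k + 1)) (·.1 < k)
      (fun p _ q _ hp hq => Or.inl (by omega))
    have hlow : (fullRows n (k + 1)).filter (·.1 < k) = fullRows n k := by
      ext q; simp only [Finset.mem_filter, mem_fullRows]; omega
    have hrow : (fullRows n (k + 1)).filter (¬ ·.1 < k) = {k} ×ˢ Finset.range (n - 1 - k) := by
      ext q
      simp only [Finset.mem_filter, mem_fullRows, Finset.mem_product, Finset.mem_singleton,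
        Finset.mem_range]
      omega
    rw [hsplit, hlow, hrow, rcWord_row, wordPerm_append, Equiv.Perm.mul_apply]
    have hy := wordPerm_rowWord_apply (n := n) (j := k) (b := n - 1 - k) (by omega) x
    rw [if_neg (by omega), if_pos (by omega)] at hy
    rw [ih _ (by omega), hy]
    omega

end RCWords

section Greedy

variable {n : ℕ}

theorem rcWord_eq_lower_append_upper (D : Finset (ℕ × ℕ)) (p : ℕ × ℕ) :
    rcWord D = rcWord (D.filter (rcLE · p)) ++ rcWord (D.filter (¬ rcLE · p)) :=
  rcWord_eq_filter_append D _ fun q _ q' _ hq hq' => by unfold rcLE at *; omega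

theorem rcWord_insert {D : Finset (ℕ × ℕ)} {p : ℕ × ℕ} (hp : p ∉ D) :
    rcWord (insert p D) =
      rcWord (D.filter (rcLE · p)) ++ (p.1 + p.2) :: rcWord (D.filter (¬ rcLE · p)) := by
  have hpp : rcLE p p := Or.inr ⟨rfl, le_rfl⟩
  rw [rcWord_eq_lower_append_upper, Finset.filter_insert, if_pos hpp, Finset.filter_insert,
    if_neg (not_not.2 hpp), Finset.insert_eq, Finset.union_comm, rcWord_union, rcWord_singleton]
  · simp
  · exact Finset.disjoint_singleton_right.2 fun h => hp (Finset.mem_filter.1 h).1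
  · simp only [Finset.mem_filter, Finset.mem_singleton]
    rintro q ⟨-, hq⟩ _ rfl
    exact hq

def MissingCellsLexGE (n : ℕ) (D : Finset (ℕ × ℕ)) (k b : ℕ) : Prop :=
  ∀ q : ℕ × ℕ, q.1 + q.2 + 2 ≤ n → q ∉ D → k < q.1 ∨ (k = q.1 ∧ b ≤ q.2)

variable {D : Finset (ℕ × ℕ)} {k b : ℕ}

theorem wordPerm_lower_apply_lt (hD : IsRC n D) (hkb : (k, b) ∉ D)
    (hmin : MissingCellsLexGE n D k b)
    {x y : Fin n} (hx : (x : ℕ) = k + b) (hxy : x < y) :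
    wordPerm n (rcWord (D.filter (rcLE · (k, b)))) x <
      wordPerm n (rcWord (D.filter (rcLE · (k, b)))) y := by
  set L := D.filter (rcLE · (k, b))
  have hsplit := rcWord_eq_filter_append L (·.1 < k) fun p _ q _ hp hq => Or.inl (by omega)
  have hfull : L.filter (·.1 < k) = fullRows n k := by
    ext q
    simp only [L, Finset.mem_filter, mem_fullRows]
    unfold rcLE
    constructor
    · rintro ⟨⟨hq, -⟩, hqk⟩
      exact ⟨hqk, hD q hq⟩
    · rintro ⟨hqk, hq⟩
      refine ⟨⟨by_contra fun hqD => ?_, Or.inl hqk⟩, hqk⟩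
      have := hmin q hq hqD
      omega
  have hrow : ∀ a ∈ rcWord (L.filter (¬ ·.1 < k)), k + b < a := by
    simp only [mem_rcWord, L, Finset.mem_filter, forall_exists_index, and_imp]
    unfold rcLE
    rintro a q hq hle hqk rfl
    have : q ≠ (k, b) := fun h => hkb (h ▸ hq)
    simp only [ne_eq, Prod.ext_iff] at this
    omega
  have hy : k + b < wordPerm n (rcWord (L.filter (¬ ·.1 < k))) y :=
    lt_wordPerm_apply hrow (by rw [Fin.lt_def] at hxy; omega)
  have hx' : wordPerm n (rcWord (L.filter (¬ ·.1 < k))) x = x :=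
    wordPerm_apply_of_forall_lt fun a ha => hx ▸ hrow a ha
  rw [hsplit, hfull, wordPerm_append, Equiv.Perm.mul_apply, Equiv.Perm.mul_apply, hx', Fin.lt_def,
    wordPerm_rcWord_fullRows_apply k x (by omega), wordPerm_rcWord_fullRows_apply k _ (by omega)]
  omega

theorem wordPerm_upper_apply_of_lt {x : Fin n} (hx : (x : ℕ) < k) :
    wordPerm n (rcWord (D.filter (¬ rcLE · (k, b)))) x = x := by
  refine wordPerm_apply_of_forall_lt fun a ha => ?_
  simp only [mem_rcWord, Finset.mem_filter] at ha
  unfold rcLE at ha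
  omega

theorem wordPerm_upper_apply_self (hn : k + b + 2 ≤ n) (hmin : MissingCellsLexGE n D k b)
    {x : Fin n} (hx : (x : ℕ) = k) :
    (wordPerm n (rcWord (D.filter (¬ rcLE · (k, b)))) x : ℕ) = k + b := by
  set U := D.filter (¬ rcLE · (k, b))
  have hsplit := rcWord_eq_filter_append U (·.1 = k) fun p hp q hq hpk hqk => by
    simp only [U, Finset.mem_filter] at hp hq
    unfold rcLE at hp hq
    exact Or.inl (by omega)
  have hrow : U.filter (·.1 = k) = {k} ×ˢ Finset.range b := by
    ext q
    simp only [U, Finset.mem_filter, Finset.mem_product, Finset.mem_singleton, Finset.mem_range]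
    unfold rcLE
    constructor
    · rintro ⟨⟨-, hq⟩, hqk⟩
      omega
    · rintro ⟨hqk, hqb⟩
      refine ⟨⟨by_contra fun hqD => ?_, by omega⟩, hqk⟩
      have := hmin q (by omega) hqD
      omega
  have hlater : ∀ a ∈ rcWord (U.filter (¬ ·.1 = k)), (x : ℕ) < a := by
    simp only [mem_rcWord, U, Finset.mem_filter, forall_exists_index, and_imp]
    unfold rcLE
    rintro a q - hq hqk rfl
    omega
  rw [hsplit, hrow, rcWord_row, wordPerm_append, Equiv.Perm.mul_apply,
    wordPerm_apply_of_forall_lt hlater, wordPerm_rowWord_apply (by omega), if_pos hx]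

theorem invLength_rcPerm_lt_rcPerm_insert (hD : IsRC n D) (hkb : (k, b) ∉ D)
    (hn : k + b + 2 ≤ n) (hmin : MissingCellsLexGE n D k b) :
    invLength (rcPerm n D) < invLength (rcPerm n (insert (k, b) D)) := by
  set u := wordPerm n (rcWord (D.filter (rcLE · (k, b))))
  set v := wordPerm n (rcWord (D.filter (¬ rcLE · (k, b))))
  set a : Fin n := ⟨k + b, by omega⟩
  set a' : Fin n := ⟨k + b + 1, by omega⟩
  set c : Fin n := ⟨k, by omega⟩
  have hvc : v c = a := Fin.ext (wordPerm_upper_apply_self hn hmin rfl)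
  have hva : v⁻¹ a = c := by rw [Equiv.Perm.inv_eq_iff_eq, hvc]
  set Q := v⁻¹ a'
  have hvQ : v Q = a' := by simp [Q]
  have hD' : rcPerm n D = u * v := by
    rw [rcPerm, rcWord_eq_lower_append_upper D (k, b), wordPerm_append]
  have hadj : adjT n (k + b) = Equiv.swap a a' := dif_pos (by omega)
  have hins : rcPerm n (insert (k, b) D) = u * v * Equiv.swap c Q := by
    rw [rcPerm, rcWord_insert hkb, wordPerm_append, wordPerm_cons]
    change u * (adjT n (k + b) * v) = _
    rw [hadj, ← hva, Equiv.swap_apply_apply, inv_inv]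
    group
  have hcQ : c < Q := by
    by_contra! h
    rcases h.lt_or_eq with h | h
    · have hfix := wordPerm_upper_apply_of_lt (D := D) (b := b) h
      rw [hvQ] at hfix
      rw [← hfix, Fin.lt_def] at h
      exact absurd h (by simp only [a', c]; omega)
    · rw [← hva, (Equiv.injective _).eq_iff] at h
      exact absurd (congrArg Fin.val h) (by simp [a, a'])
  rw [hD', hins]
  refine invLength_lt_mul_swap hcQ ?_
  rw [Equiv.Perm.mul_apply, Equiv.Perm.mul_apply, hvc, hvQ]
  exact wordPerm_lower_apply_lt hD hkb hmin rfl (by simp [a, a', Fin.lt_def])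

theorem AssocRC.of_greedyStep {D D' : Finset (ℕ × ℕ)} {w : Perm' n} (hD : AssocRC n D w)
    (h : GreedyStep n D D') : AssocRC n D' (rcPerm n D') := by
  obtain ⟨⟨k, b⟩, hkb, hn, hmin, rfl⟩ := h
  obtain ⟨hvalid, rfl, hcard⟩ := hD
  have hlt := invLength_rcPerm_lt_rcPerm_insert hvalid hkb hn hmin
  have hle := invLength_rcPerm_le_card (n := n) (insert (k, b) D)
  rw [Finset.card_insert_of_notMem hkb] at hle
  refine ⟨(Finset.forall_mem_insert _ _ _).2 ⟨hn, hvalid⟩, rfl, ?_⟩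
  rw [Finset.card_insert_of_notMem hkb]
  omega

end Greedy

/-- For an rc-graph `R` associated to `w`, every member of the greedy
sequence `R = R₀ ⊂ R₁ ⊂ ⋯ ⊂ R_m` (where `m = ℓ(w₀) - ℓ(w)`) is an rc-graph, i.e.
`d(R_i)` is a reduced word for some permutation. -/
theorem greedy_sequence_is_rc (n : ℕ) (w : Perm' n) (R : Finset (ℕ × ℕ)) (hR : AssocRC n R w)
    (Rs : ℕ → Finset (ℕ × ℕ)) (hR0 : Rs 0 = R)
    (hstep : ∀ i < invLength (w0 n) - invLength w, GreedyStep n (Rs i) (Rs (i + 1))) :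
    ∀ i ≤ invLength (w0 n) - invLength w, ∃ v : Perm' n, AssocRC n (Rs i) v := by
  intro i hi
  induction i with
  | zero => exact ⟨w, hR0 ▸ hR⟩
  | succ i ih =>
    obtain ⟨v, hv⟩ := ih (by omega)
    exact ⟨_, hv.of_greedyStep (hstep i (by omega))⟩
end
end

section
/- Let w ∈ Σ_n, let R ∈ R(w) be an rc-graph associated to w, and let R = R₀ ⊂ R₁ ⊂ ⋯ ⊂ R_m (m = ℓ(w₀)−ℓ(w)) be the greedy sequence. If R_{i+1} is obtained from R_i by adding the pair (k,b), then (k,b) is a valid label of the Bruhat cover w(R_i) ⋖ w(R_{i+1}) in the labeled Bruhat order (i.e. w(R_i)⁻¹w(R_{i+1}) is a transposition (i',j') with i' ≤ k < j' and b = w(R_i)(i')); moreover, the resulting labeled chain γ(R) from w to w₀ is increasing. -/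
open MvPolynomial

noncomputable section

/-!
Let `(k, b)` be the pair added to `S = R_i`. Every valid position lexicographically before it is
already in `S`, so in the order `rcLE` the word of `S` is `PA · PB`, where `PA` reads the full rows
above `k` and then the part of row `k` right of `b`, `PB` starts with the full segment
`k + b - 1, …, k` of row `k`, and adding `(k, b)` inserts the letter `k + b` between the two.
Hence `PA` sends `k + b` to `b` and larger positions above `b`, `PB` sends `k` to `k + b` and
fixes smaller positions, and `w(R_{i+1}) = w(R_i) · (k j)` with `k < j`, `w(R_i) k = b < w(R_i) j`.
Such a transposition raises the inversion number by `1 + 2·#{intermediate values}`, while the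
word of `R_{i+1}` has only `ℓ(w(R_i)) + 1` letters: there are no intermediate values, so the step is
a cover labeled `(k, b)` and `R_{i+1}` is again reduced. The labels increase because each greedy
pair is the lexicographic minimum of the valid positions still missing.
-/

namespace RCGraph

variable {n : ℕ}

def reversedPairs (t : Perm' n) : Finset (Fin n × Fin n) :=
  Finset.univ.filter fun x => x.1 < x.2 ∧ t x.2 < t x.1

lemma invLength_eq_sum (u : Perm' n) :
    invLength u = ∑ x : Fin n × Fin n, if x.1 < x.2 ∧ u x.2 < u x.1 then 1 else 0 := by
  rw [invLength, Finset.card_filter]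

/-- Only the pairs whose order `t` reverses can change their inversion status. -/
lemma invLength_mul_inv_add (u t : Perm' n) :
    invLength (u * t⁻¹) + ((reversedPairs t).filter fun x => u x.2 < u x.1).card =
      invLength u + ((reversedPairs t).filter fun x => u x.1 < u x.2).card := by
  have hut : invLength (u * t⁻¹) =
      ∑ x : Fin n × Fin n, if t x.1 < t x.2 ∧ u x.2 < u x.1 then 1 else 0 := by
    rw [invLength_eq_sum, ← Equiv.sum_comp (Equiv.prodCongr t t)]
    simp
  have hswap : ((reversedPairs t).filter fun x => u x.1 < u x.2).card =
      ∑ x : Fin n × Fin n, if x.2 < x.1 ∧ t x.1 < t x.2 ∧ u x.2 < u x.1 then 1 else 0 := by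
    rw [reversedPairs, Finset.filter_filter, Finset.card_filter]
    simp_rw [and_assoc]
    exact (Equiv.sum_comp (Equiv.prodComm _ _) _).symm
  rw [hut, hswap, invLength_eq_sum, reversedPairs, Finset.filter_filter, Finset.card_filter,
    ← Finset.sum_add_distrib, ← Finset.sum_add_distrib]
  refine Finset.sum_congr rfl fun x _ => ?_
  have ht : t x.1 = t x.2 ↔ x.1 = x.2 := t.injective.eq_iff
  have hu : u x.1 = u x.2 ↔ x.1 = x.2 := u.injective.eq_iff
  rcases lt_trichotomy x.1 x.2 with h | h | h <;>
    rcases lt_trichotomy (t x.1) (t x.2) with h' | h' | h' <;>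
    rcases lt_trichotomy (u x.1) (u x.2) with h'' | h'' | h'' <;>
    simp_all [lt_asymm]

lemma reversedPairs_swap {i j : Fin n} (hij : i < j) :
    reversedPairs (Equiv.swap i j) =
      ((Finset.Ioo i j).map ⟨(i, ·), Prod.mk_right_injective i⟩ ∪
        (Finset.Ioo i j).map ⟨(·, j), Prod.mk_left_injective j⟩) ∪ {(i, j)} := by
  ext ⟨a, b⟩
  simp only [reversedPairs, Finset.mem_union,
    Finset.mem_map, Finset.mem_Ioo, Function.Embedding.coeFn_mk, Prod.mk.injEq,
    Finset.mem_singleton, Equiv.swap_apply_def]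
  grind

lemma card_filter_reversedPairs_swap {i j : Fin n} (hij : i < j) (P : Fin n × Fin n → Prop)
    [DecidablePred P] :
    ((reversedPairs (Equiv.swap i j)).filter P).card =
      ∑ m ∈ Finset.Ioo i j, ((if P (i, m) then 1 else 0) + if P (m, j) then 1 else 0) +
        if P (i, j) then 1 else 0 := by
  have hdisj : Disjoint ((Finset.Ioo i j).map ⟨(i, ·), Prod.mk_right_injective i⟩)
      ((Finset.Ioo i j).map ⟨(·, j), Prod.mk_left_injective j⟩) := by
    simp only [Finset.disjoint_left, Finset.mem_map, Finset.mem_Ioo,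
      Function.Embedding.coeFn_mk, Prod.ext_iff]
    grind
  have hij' : (i, j) ∉ (Finset.Ioo i j).map ⟨(i, ·), Prod.mk_right_injective i⟩ ∪
      (Finset.Ioo i j).map ⟨(·, j), Prod.mk_left_injective j⟩ := by
    simp
  rw [reversedPairs_swap hij, Finset.card_filter,
    Finset.sum_union (Finset.disjoint_singleton_right.2 hij'), Finset.sum_union hdisj,
    Finset.sum_map, Finset.sum_map, Finset.sum_singleton, Finset.sum_add_distrib]
  rfl

lemma invLength_mul_swap (u : Perm' n) {i j : Fin n} (hij : i < j) (hu : u i < u j) :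
    invLength (u * Equiv.swap i j) =
      invLength u + 1 + 2 * ((Finset.Ioo i j).filter fun m => u i < u m ∧ u m < u j).card := by
  have key := invLength_mul_inv_add u (Equiv.swap i j)
  rw [Equiv.swap_inv, card_filter_reversedPairs_swap hij, card_filter_reversedPairs_swap hij,
    if_neg (lt_asymm hu), if_pos hu] at key
  have hpoint : ∀ m ∈ Finset.Ioo i j,
      ((if u m < u i then 1 else 0) + if u j < u m then 1 else 0) +
          2 * (if u i < u m ∧ u m < u j then 1 else 0) =
        (if u i < u m then 1 else 0) + if u m < u j then 1 else 0 := by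
    intro m hm
    rw [Finset.mem_Ioo] at hm
    have hi : u m ≠ u i := u.injective.ne hm.1.ne'
    have hj : u m ≠ u j := u.injective.ne hm.2.ne
    split_ifs <;> grind
  have hsum := Finset.sum_congr rfl hpoint
  rw [Finset.sum_add_distrib, ← Finset.mul_sum] at hsum
  simp only at key
  rw [Finset.card_filter]
  omega

lemma wordPerm_cons (c : ℕ) (l : List ℕ) : wordPerm n (c :: l) = adjT n c * wordPerm n l := by
  simp [wordPerm]

lemma wordPerm_append (l₁ l₂ : List ℕ) :
    wordPerm n (l₁ ++ l₂) = wordPerm n l₁ * wordPerm n l₂ := by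
  simp [wordPerm]

lemma adjT_apply_of_ne {c : ℕ} {x : Fin n} (h₀ : (x : ℕ) ≠ c) (h₁ : (x : ℕ) ≠ c + 1) :
    adjT n c x = x := by
  unfold adjT
  split_ifs
  · exact Equiv.swap_apply_of_ne_of_ne (Fin.ne_of_val_ne h₀) (Fin.ne_of_val_ne h₁)
  · rfl

lemma val_adjT_apply_left {c : ℕ} (hc : c + 1 < n) {x : Fin n} (hx : (x : ℕ) = c) :
    (adjT n c x : ℕ) = c + 1 := by
  rw [show x = ⟨c, by omega⟩ from Fin.ext hx]
  simp [adjT, hc]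

lemma val_adjT_apply_right {c : ℕ} (hc : c + 1 < n) {x : Fin n} (hx : (x : ℕ) = c + 1) :
    (adjT n c x : ℕ) = c := by
  rw [show x = ⟨c + 1, hc⟩ from Fin.ext hx]
  simp [adjT, hc]

lemma wordPerm_apply_of_forall_ne {l : List ℕ} {x : Fin n}
    (h : ∀ c ∈ l, (x : ℕ) ≠ c ∧ (x : ℕ) ≠ c + 1) : wordPerm n l x = x := by
  induction l with
  | nil => rfl
  | cons c l ih =>
    rw [wordPerm_cons, Equiv.Perm.mul_apply, ih fun c' hc' => h c' (List.mem_cons_of_mem c hc')]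
    exact adjT_apply_of_ne (h c List.mem_cons_self).1 (h c List.mem_cons_self).2

lemma invLength_mul_adjT_le (u : Perm' n) (c : ℕ) :
    invLength (u * adjT n c) ≤ invLength u + 1 := by
  unfold adjT
  split_ifs with hc
  · have hlt : (⟨c, by omega⟩ : Fin n) < ⟨c + 1, hc⟩ := Fin.mk_lt_mk.2 c.lt_succ_self
    have hIoo : Finset.Ioo (⟨c, by omega⟩ : Fin n) ⟨c + 1, hc⟩ = ∅ := by
      ext x
      simp only [Finset.mem_Ioo, Fin.lt_def, Finset.notMem_empty, iff_false]
      omega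
    have key := invLength_mul_inv_add u (Equiv.swap ⟨c, by omega⟩ ⟨c + 1, hc⟩)
    rw [Equiv.swap_inv, card_filter_reversedPairs_swap hlt, card_filter_reversedPairs_swap hlt,
      hIoo] at key
    simp only [Finset.sum_empty] at key
    split_ifs at key <;> omega
  · simp

lemma invLength_wordPerm_le (l : List ℕ) : invLength (wordPerm n l) ≤ l.length := by
  induction l using List.reverseRecOn with
  | nil =>
    simp only [wordPerm, List.map_nil, List.prod_nil, List.length_nil, nonpos_iff_eq_zero]
    exact Finset.card_eq_zero.2 (Finset.filter_false_of_mem fun x _ h => lt_asymm h.1 h.2)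
  | append_singleton l c ih =>
    rw [wordPerm_append, List.length_append]
    have hc : wordPerm n [c] = adjT n c := by simp [wordPerm]
    rw [hc]
    exact (invLength_mul_adjT_le _ c).trans (by simpa using ih)

lemma rcWord_union {A B : Finset (ℕ × ℕ)} (h : ∀ a ∈ A, ∀ b ∈ B, ¬ rcLE b a) :
    rcWord (A ∪ B) = rcWord A ++ rcWord B := by
  have hlt : ∀ a ∈ A.sort rcLE, ∀ b ∈ B.sort rcLE, rcLE a b ∧ a ≠ b := by
    intro a ha b hb
    have hba := h a (Finset.mem_sort _ |>.1 ha) b (Finset.mem_sort _ |>.1 hb)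
    refine ⟨by unfold rcLE at *; omega, ?_⟩
    rintro rfl
    unfold rcLE at hba
    omega
  have hsort : (A ∪ B).sort rcLE = A.sort rcLE ++ B.sort rcLE := by
    have hAB : A ∪ B = (A.sort rcLE ++ B.sort rcLE).toFinset := by simp
    rw [hAB, List.toFinset_sort rcLE]
    · exact List.pairwise_append.2
        ⟨Finset.pairwise_sort _ _, Finset.pairwise_sort _ _, fun a ha b hb => (hlt a ha b hb).1⟩
    · exact List.nodup_append.2
        ⟨Finset.sort_nodup _ _, Finset.sort_nodup _ _, fun a ha b hb => (hlt a ha b hb).2⟩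
  rw [rcWord, hsort, List.map_append]
  rfl

lemma rcPerm_union {A B : Finset (ℕ × ℕ)} (h : ∀ a ∈ A, ∀ b ∈ B, ¬ rcLE b a) :
    rcPerm n (A ∪ B) = rcPerm n A * rcPerm n B := by
  rw [rcPerm, rcWord_union h, wordPerm_append]
  rfl

lemma rcPerm_singleton (p : ℕ × ℕ) : rcPerm n {p} = adjT n (p.1 + p.2) := by
  simp [rcPerm, rcWord, wordPerm]

lemma rcPerm_apply_of_forall_ne {S : Finset (ℕ × ℕ)} {x : Fin n}
    (h : ∀ q ∈ S, (x : ℕ) ≠ q.1 + q.2 ∧ (x : ℕ) ≠ q.1 + q.2 + 1) : rcPerm n S x = x := by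
  refine wordPerm_apply_of_forall_ne fun c hc => ?_
  obtain ⟨q, hq, rfl⟩ := List.mem_map.1 hc
  exact h q ((Finset.mem_sort _).1 hq)

lemma invLength_rcPerm_le_card (S : Finset (ℕ × ℕ)) : invLength (rcPerm n S) ≤ S.card :=
  (invLength_wordPerm_le (rcWord S)).trans_eq (by simp [rcWord])

lemma rcPerm_eq_mul_filter (S : Finset (ℕ × ℕ)) (p : ℕ × ℕ) :
    rcPerm n S =
      rcPerm n (S.filter fun q => rcLE q p) * rcPerm n (S.filter fun q => ¬ rcLE q p) := by
  rw [← rcPerm_union, Finset.filter_union_filter_not_eq]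
  simp only [Finset.mem_filter]
  exact fun a ha c hc hca => hc.2 (IsTrans.trans _ _ _ hca ha.2)

lemma rcPerm_insert {S : Finset (ℕ × ℕ)} {p : ℕ × ℕ} (hp : p ∉ S) :
    rcPerm n (insert p S) =
      rcPerm n (S.filter fun q => rcLE q p) * adjT n (p.1 + p.2) *
        rcPerm n (S.filter fun q => ¬ rcLE q p) := by
  have hpB : ∀ a ∈ ({p} : Finset (ℕ × ℕ)), ∀ c ∈ S.filter fun q => ¬ rcLE q p, ¬ rcLE c a := by
    simp only [Finset.mem_singleton, Finset.mem_filter]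
    rintro a rfl c hc
    exact hc.2
  have hAB : ∀ a ∈ S.filter (fun q => rcLE q p),
      ∀ c ∈ insert p (S.filter fun q => ¬ rcLE q p), ¬ rcLE c a := by
    simp only [Finset.mem_insert, Finset.mem_filter]
    rintro a ⟨haS, hap⟩ c (rfl | hc) hca
    · exact hp (by rwa [(antisymm hap hca : a = c)] at haS)
    · exact hc.2 (IsTrans.trans _ _ _ hca hap)
  rw [← Finset.filter_union_filter_not_eq (fun q => rcLE q p) S, ← Finset.union_insert,
    rcPerm_union hAB, Finset.insert_eq, rcPerm_union hpB, rcPerm_singleton, mul_assoc,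
    Finset.filter_union_filter_not_eq]

lemma val_rcPerm_row_apply {k len : ℕ} (hn : k + len < n) {x : Fin n} (hk : k ≤ x)
    (hx : (x : ℕ) ≤ k + len) :
    (rcPerm n ({k} ×ˢ Finset.range len) x : ℕ) = if (x : ℕ) = k then k + len else x - 1 := by
  induction len with
  | zero =>
    simp only [Finset.range_zero, Finset.product_empty, rcPerm, rcWord, Finset.sort_empty,
      List.map_nil, wordPerm, List.prod_nil, Equiv.Perm.coe_one, id_eq]
    split_ifs <;> omega
  | succ len ih =>
    have hrow : {k} ×ˢ Finset.range (len + 1) = {(k, len)} ∪ {k} ×ˢ Finset.range len := by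
      ext ⟨a, b⟩
      simp only [Finset.mem_product, Finset.mem_singleton, Finset.mem_range, Finset.mem_union,
        Prod.mk.injEq]
      omega
    have horder : ∀ a ∈ ({(k, len)} : Finset (ℕ × ℕ)), ∀ b ∈ {k} ×ˢ Finset.range len,
        ¬ rcLE b a := by
      simp only [Finset.mem_singleton, Finset.mem_product, Finset.mem_range]
      rintro a rfl b ⟨hb₁, hb₂⟩
      unfold rcLE
      omega
    rw [hrow, rcPerm_union horder, rcPerm_singleton, Equiv.Perm.mul_apply]
    by_cases hxk : (x : ℕ) ≤ k + len
    · have hy := ih (by omega) hxk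
      split_ifs at hy ⊢ with hx0
      · rw [val_adjT_apply_left (by omega) hy]
        omega
      · rw [adjT_apply_of_ne (by omega) (by omega), hy]
    · have hfix : rcPerm n ({k} ×ˢ Finset.range len) x = x := by
        refine rcPerm_apply_of_forall_ne fun q hq => ?_
        simp only [Finset.mem_product, Finset.mem_singleton, Finset.mem_range] at hq
        omega
      rw [hfix, val_adjT_apply_right (by omega) (by omega), if_neg (by omega)]
      omega

def topRows (n k : ℕ) : Finset (ℕ × ℕ) := (fullRC n).filter fun q => q.1 < k

lemma topRows_succ (k : ℕ) :
    topRows n (k + 1) = topRows n k ∪ {k} ×ˢ Finset.range (n - 1 - k) := by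
  ext ⟨a, b⟩
  simp only [topRows, fullRC, Finset.mem_filter, Finset.mem_product, Finset.mem_range,
    Finset.mem_union, Finset.mem_singleton]
  omega

lemma val_rcPerm_topRows_apply {k : ℕ} {x : Fin n} (hx : k ≤ x) :
    (rcPerm n (topRows n k) x : ℕ) = x - k := by
  induction k generalizing x with
  | zero => simp [topRows, rcPerm, rcWord, wordPerm]
  | succ k ih =>
    have horder : ∀ a ∈ topRows n k, ∀ b ∈ {k} ×ˢ Finset.range (n - 1 - k), ¬ rcLE b a := by
      intro a ha b hb
      simp only [topRows, Finset.mem_filter, Finset.mem_product, Finset.mem_singleton] at ha hb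
      unfold rcLE
      omega
    have hrow := val_rcPerm_row_apply (k := k) (len := n - 1 - k) (by omega) (x := x) (by omega)
      (by omega)
    rw [if_neg (by omega)] at hrow
    rw [topRows_succ, rcPerm_union horder, Equiv.Perm.mul_apply, ih (by omega), hrow]
    omega

lemma le_val_apply_of_forall_lt {σ : Perm' n} {L : ℕ} (h : ∀ x : Fin n, (x : ℕ) < L → σ x = x)
    {x : Fin n} (hx : L ≤ x) : L ≤ σ x := by
  by_contra! hlt
  have hσx : σ x = x := σ.injective (h (σ x) hlt)
  rw [hσx] at hlt
  omega

/-- Conjugation by `PB` turns `s_{k+b}` into the transposition of `k` and `PB⁻¹ (k + b + 1) > k`;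
by `invLength_mul_swap`, the length bound leaves no value of `PA * PB` strictly between the two. -/
lemma isLabeledCover_mul_adjT_mul {PA PB : Perm' n} {k b : ℕ} (hn : k + b + 1 < n)
    (hA₀ : ∀ x : Fin n, (x : ℕ) = k + b → (PA x : ℕ) = b)
    (hA₁ : ∀ x : Fin n, k + b < x → b < PA x)
    (hB₀ : ∀ x : Fin n, (x : ℕ) = k → (PB x : ℕ) = k + b)
    (hB₁ : ∀ x : Fin n, (x : ℕ) < k → PB x = x)
    (hlen : invLength (PA * adjT n (k + b) * PB) ≤ invLength (PA * PB) + 1) :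
    IsLabeledCover (PA * PB) (PA * adjT n (k + b) * PB) k b ∧
      invLength (PA * adjT n (k + b) * PB) = invLength (PA * PB) + 1 := by
  set i : Fin n := ⟨k, by omega⟩
  set j : Fin n := PB⁻¹ ⟨k + b + 1, hn⟩
  have hPBi : PB i = ⟨k + b, by omega⟩ := Fin.ext (hB₀ i rfl)
  have hPBj : PB j = ⟨k + b + 1, hn⟩ := PB.apply_symm_apply _
  have hij : i < j := by
    rw [Fin.lt_def]
    by_contra! hji
    rcases hji.lt_or_eq with hlt | heq
    · have hfix := congrArg Fin.val ((hB₁ j hlt).symm.trans hPBj)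
      simp only [i] at hlt hfix
      omega
    · rw [Fin.ext heq, hPBi] at hPBj
      simp at hPBj
  have hui : ((PA * PB) i : ℕ) = b := by
    rw [Equiv.Perm.mul_apply, hPBi]
    exact hA₀ _ rfl
  have huj : b < ((PA * PB) j : ℕ) := by
    rw [Equiv.Perm.mul_apply, hPBj]
    exact hA₁ _ (by simp)
  have hw : PA * adjT n (k + b) * PB = PA * PB * Equiv.swap i j := by
    have hi : i = PB⁻¹ ⟨k + b, by omega⟩ := by rw [← hPBi]; exact (PB.symm_apply_apply i).symm
    rw [hi, Equiv.swap_apply_apply, inv_inv, adjT, dif_pos hn]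
    group
  have hform := invLength_mul_swap (PA * PB) hij (by rw [Fin.lt_def]; omega)
  rw [← hw] at hform
  have hN : ((Finset.Ioo i j).filter
      fun m => (PA * PB) i < (PA * PB) m ∧ (PA * PB) m < (PA * PB) j) = ∅ :=
    Finset.card_eq_zero.1 (by omega)
  refine ⟨⟨i, j, hij, by rw [Fin.lt_def]; omega, fun m h₁ h₂ => ?_, hw, le_rfl, hij, hui.symm⟩,
    by omega⟩
  exact Finset.filter_eq_empty_iff.1 hN (Finset.mem_Ioo.2 ⟨h₁, h₂⟩)

section Greedy

variable {S : Finset (ℕ × ℕ)} {k b : ℕ}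

lemma filter_rcLE_eq_of_forall_lex_lt_mem (hS : IsRC n S) (hp : (k, b) ∉ S)
    (hbelow : ∀ q : ℕ × ℕ, q.1 + q.2 + 2 ≤ n → q.1 < k ∨ (q.1 = k ∧ q.2 < b) → q ∈ S) :
    S.filter (fun q => rcLE q (k, b)) = topRows n k ∪ S.filter fun q => q.1 = k ∧ b < q.2 := by
  ext ⟨a, c⟩
  have hval := hS (a, c)
  have hne : (a, c) ∈ S → ¬ (a = k ∧ c = b) := by rintro h ⟨rfl, rfl⟩; exact hp h
  have hmem := hbelow (a, c)
  simp only [rcLE, topRows, fullRC, Finset.mem_union, Finset.mem_filter, Finset.mem_product,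
    Finset.mem_range] at hval hmem ⊢
  grind

lemma filter_not_rcLE_eq_of_forall_lex_lt_mem (hv : k + b + 2 ≤ n)
    (hbelow : ∀ q : ℕ × ℕ, q.1 + q.2 + 2 ≤ n → q.1 < k ∨ (q.1 = k ∧ q.2 < b) → q ∈ S) :
    S.filter (fun q => ¬ rcLE q (k, b)) = {k} ×ˢ Finset.range b ∪ S.filter fun q => k < q.1 := by
  ext ⟨a, c⟩
  have hmem := hbelow (a, c)
  simp only [rcLE, Finset.mem_union, Finset.mem_filter, Finset.mem_product, Finset.mem_range,
    Finset.mem_singleton] at hmem ⊢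
  grind

lemma rcPerm_topRows_union {H : Finset (ℕ × ℕ)} (hH : ∀ q ∈ H, q.1 = k ∧ b < q.2) :
    rcPerm n (topRows n k ∪ H) = rcPerm n (topRows n k) * rcPerm n H := by
  refine rcPerm_union fun a ha c hc => ?_
  have := hH c hc
  simp only [topRows, Finset.mem_filter] at ha
  unfold rcLE
  omega

lemma val_rcPerm_topRows_union_apply_eq {H : Finset (ℕ × ℕ)} (hH : ∀ q ∈ H, q.1 = k ∧ b < q.2)
    {x : Fin n} (hx : (x : ℕ) = k + b) : (rcPerm n (topRows n k ∪ H) x : ℕ) = b := by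
  have hHx : rcPerm n H x = x := rcPerm_apply_of_forall_ne fun q hq => by
    have := hH q hq
    omega
  rw [rcPerm_topRows_union hH, Equiv.Perm.mul_apply, hHx, val_rcPerm_topRows_apply (by omega)]
  omega

lemma lt_val_rcPerm_topRows_union_apply {H : Finset (ℕ × ℕ)} (hH : ∀ q ∈ H, q.1 = k ∧ b < q.2)
    {x : Fin n} (hx : k + b < x) : b < (rcPerm n (topRows n k ∪ H) x : ℕ) := by
  have hHx : k + b + 1 ≤ (rcPerm n H x : ℕ) :=
    le_val_apply_of_forall_lt (fun y hy => rcPerm_apply_of_forall_ne fun q hq => by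
      have := hH q hq
      omega) hx
  rw [rcPerm_topRows_union hH, Equiv.Perm.mul_apply, val_rcPerm_topRows_apply (by omega)]
  omega

lemma val_rcPerm_row_union_apply_self {C : Finset (ℕ × ℕ)} (hC : ∀ q ∈ C, k < q.1)
    (hn : k + b < n) {x : Fin n} (hx : (x : ℕ) = k) :
    (rcPerm n ({k} ×ˢ Finset.range b ∪ C) x : ℕ) = k + b := by
  have horder : ∀ a ∈ {k} ×ˢ Finset.range b, ∀ c ∈ C, ¬ rcLE c a := by
    intro a ha c hc
    have := hC c hc
    simp only [Finset.mem_product, Finset.mem_singleton] at ha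
    unfold rcLE
    omega
  have hCx : rcPerm n C x = x := rcPerm_apply_of_forall_ne fun q hq => by
    have := hC q hq
    omega
  rw [rcPerm_union horder, Equiv.Perm.mul_apply, hCx,
    val_rcPerm_row_apply hn hx.ge (by omega), if_pos hx]

lemma greedy_insert_cover (hS : AssocRC n S (rcPerm n S))
    (hv : k + b + 2 ≤ n) (hp : (k, b) ∉ S)
    (hmin : ∀ q : ℕ × ℕ, q.1 + q.2 + 2 ≤ n → q ∉ S → k < q.1 ∨ (k = q.1 ∧ b ≤ q.2)) :
    IsLabeledCover (rcPerm n S) (rcPerm n (insert (k, b) S)) k b ∧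
      AssocRC n (insert (k, b) S) (rcPerm n (insert (k, b) S)) := by
  have hbelow : ∀ q : ℕ × ℕ, q.1 + q.2 + 2 ≤ n → q.1 < k ∨ (q.1 = k ∧ q.2 < b) → q ∈ S :=
    fun q hq hlt => by_contra fun hqS => by have := hmin q hq hqS; omega
  have hA := filter_rcLE_eq_of_forall_lex_lt_mem hS.1 hp hbelow
  have hB := filter_not_rcLE_eq_of_forall_lex_lt_mem hv hbelow
  have hH : ∀ q ∈ S.filter fun q => q.1 = k ∧ b < q.2, q.1 = k ∧ b < q.2 :=
    fun q hq => (Finset.mem_filter.1 hq).2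
  have hC : ∀ q ∈ S.filter fun q => k < q.1, k < q.1 := fun q hq => (Finset.mem_filter.1 hq).2
  have hcard : (insert (k, b) S).card = invLength (rcPerm n S) + 1 := by
    rw [Finset.card_insert_of_notMem hp, hS.2.2]
  have hlen := invLength_rcPerm_le_card (n := n) (insert (k, b) S)
  rw [rcPerm_insert hp, hcard, rcPerm_eq_mul_filter S (k, b)] at hlen
  obtain ⟨hcover, hlen'⟩ := isLabeledCover_mul_adjT_mul (by omega)
    (hA ▸ fun x => val_rcPerm_topRows_union_apply_eq hH)
    (hA ▸ fun x => lt_val_rcPerm_topRows_union_apply hH)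
    (hB ▸ fun x => val_rcPerm_row_union_apply_self hC (by omega))
    (fun x hx => rcPerm_apply_of_forall_ne fun q hq => by
      have := (Finset.mem_filter.1 hq).2
      unfold rcLE at this
      omega) hlen
  rw [← rcPerm_eq_mul_filter, ← rcPerm_insert hp] at hcover hlen'
  refine ⟨hcover, fun q hq => ?_, rfl, by rw [hcard, hlen']⟩
  rcases Finset.mem_insert.1 hq with rfl | hq
  · exact hv
  · exact hS.1 q hq

end Greedy

end RCGraph

namespace GreedyStep

variable {n : ℕ} {S S' : Finset (ℕ × ℕ)} {p : ℕ × ℕ}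

lemma subset (h : GreedyStep n S S') : S ⊆ S' := by
  obtain ⟨p, -, -, -, rfl⟩ := h
  exact Finset.subset_insert p S

lemma valid_and_lexMin (h : GreedyStep n S S') (hp : p ∉ S) (hS' : S' = insert p S) :
    p.1 + p.2 + 2 ≤ n ∧
      ∀ q : ℕ × ℕ, q.1 + q.2 + 2 ≤ n → q ∉ S → p.1 < q.1 ∨ (p.1 = q.1 ∧ p.2 ≤ q.2) := by
  obtain ⟨p₀, -, hv, hmin, rfl⟩ := h
  obtain rfl : p = p₀ :=
    (Finset.mem_insert.1 (hS' ▸ Finset.mem_insert_self p S)).resolve_right hp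
  exact ⟨hv, hmin⟩

lemma isLabeledCover (h : GreedyStep n S S') (hS : AssocRC n S (rcPerm n S))
    (hp : p ∉ S) (hS' : S' = insert p S) :
    IsLabeledCover (rcPerm n S) (rcPerm n S') p.1 p.2 ∧ AssocRC n S' (rcPerm n S') := by
  obtain ⟨hv, hmin⟩ := h.valid_and_lexMin hp hS'
  subst hS'
  exact RCGraph.greedy_insert_cover hS hv hp hmin

lemma lexLt_of_notMem (h : GreedyStep n S S') (hp : p ∉ S) (hS' : S' = insert p S)
    {q : ℕ × ℕ} (hq : q.1 + q.2 + 2 ≤ n) (hqS' : q ∉ S') : lexLt p q := by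
  have hpq : p ≠ q := by
    rintro rfl
    exact hqS' (hS' ▸ Finset.mem_insert_self p S)
  rcases (h.valid_and_lexMin hp hS').2 q hq fun hqS => hqS' (h.subset hqS) with h₁ | ⟨h₁, h₂⟩
  · exact Or.inl h₁
  · exact Or.inr ⟨h₁, h₂.lt_of_ne fun h₂ => hpq (Prod.ext h₁ h₂)⟩

end GreedyStep

/-- In the greedy sequence of an rc-graph `R ∈ 𝓡(w)`, if `R_{i+1}`
is obtained from `R_i` by adding the pair `(k,b)`, then `(k,b)` is a valid label of the
Bruhat cover `w(R_i) ⋖ w(R_{i+1})` in the labeled Bruhat order; moreover the resulting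
labeled chain from `w` to `w₀` is increasing. -/
theorem greedy_sequence_labeled_increasing (n : ℕ) (w : Perm' n) (R : Finset (ℕ × ℕ)) (hR : AssocRC n R w)
    (Rs : ℕ → Finset (ℕ × ℕ)) (hR0 : Rs 0 = R)
    (hstep : ∀ i < invLength (w0 n) - invLength w, GreedyStep n (Rs i) (Rs (i + 1))) :
    (∀ i < invLength (w0 n) - invLength w, ∀ p : ℕ × ℕ,
        p ∉ Rs i → Rs (i + 1) = insert p (Rs i) →
        IsLabeledCover (rcPerm n (Rs i)) (rcPerm n (Rs (i + 1))) p.1 p.2) ∧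
    (∀ i j : ℕ, i < j → j < invLength (w0 n) - invLength w → ∀ p q : ℕ × ℕ,
        p ∉ Rs i → Rs (i + 1) = insert p (Rs i) →
        q ∉ Rs j → Rs (j + 1) = insert q (Rs j) → lexLt p q) := by
  set m := invLength (w0 n) - invLength w
  have hassoc : ∀ i ≤ m, AssocRC n (Rs i) (rcPerm n (Rs i)) := by
    intro i hi
    induction i with
    | zero => rwa [hR0, hR.2.1]
    | succ i ih =>
      obtain ⟨p, hp, -, -, hins⟩ := hstep i hi
      exact ((hstep i hi).isLabeledCover (ih (by omega)) hp hins).2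
  have hmono : ∀ i j, i ≤ j → j ≤ m → Rs i ⊆ Rs j := by
    intro i j hij hj
    induction j, hij using Nat.le_induction with
    | base => exact subset_rfl
    | succ j _ ih => exact (ih (by omega)).trans (hstep j (by omega)).subset
  refine ⟨fun i hi p hp hins => ((hstep i hi).isLabeledCover (hassoc i hi.le) hp hins).1, ?_⟩
  intro i j hij hj p q hp hinsp hq hinsq
  exact (hstep i (by omega)).lexLt_of_notMem hp hinsp ((hstep j hj).valid_and_lexMin hq hinsq).1
    fun hqi => hq (hmono (i + 1) j hij hj.le hqi)
end
end

section
/- Let w ∈ Σ_n and let γ be an increasing chain in the labeled Bruhat order from w to the longest permutation w₀. Then for every labeled cover u →^{(k,b)} v occurring in γ, one has u⁻¹v = (k,l) for some l > k; in particular b = u(k). -/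
open MvPolynomial

noncomputable section

lemma w0_apply_val {n : ℕ} (p : Fin n) : (w0 n p : ℕ) = n - 1 - (p : ℕ) := by
  have hp := p.isLt
  simp only [w0, Fin.revPerm_apply, Fin.val_rev]
  omega

lemma vals_high {n : ℕ} (v : Perm' n) (k : ℕ)
    (hv : ∀ p : Fin n, (p : ℕ) < k → v p = w0 n p)
    (q : Fin n) (hq : k ≤ (q : ℕ)) : (v q : ℕ) + k < n := by
  by_contra hcon
  push_neg at hcon
  have h1 := (v q).isLt
  have h2 := q.isLt
  set a : ℕ := (v q : ℕ) with ha
  have hpk : n - 1 - a < k := by omega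
  have hpn : n - 1 - a < n := by omega
  have h3 := hv ⟨n - 1 - a, hpn⟩ hpk
  have h4 : (v ⟨n - 1 - a, hpn⟩ : ℕ) = a := by
    rw [h3, w0_apply_val]; show n - 1 - (n - 1 - a) = a; omega
  have h5 : v ⟨n - 1 - a, hpn⟩ = v q := Fin.ext h4
  have h6 := v.injective h5
  have h7 : (q : ℕ) = n - 1 - a := by rw [← h6]
  omega

lemma step_main {n : ℕ} (u v : Perm' n) (k b : ℕ) (i j : Fin n)
    (hij : i < j)
    (hmid : ∀ q : Fin n, i < q → q < j → ¬(u i < u q ∧ u q < u j))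
    (heq : v = u * Equiv.swap i j)
    (hik : (i : ℕ) ≤ k) (hkj : k < (j : ℕ)) (hb : b = (u i : ℕ))
    (hC1 : ∀ p : Fin n, (p : ℕ) < k → v p = w0 n p)
    (hkn : k < n)
    (hvk : v ⟨k, hkn⟩ = w0 n ⟨k, hkn⟩ ∨ b < (v ⟨k, hkn⟩ : ℕ)) :
    (i : ℕ) = k := by
  by_contra hne
  have hilt : (i : ℕ) < k := lt_of_le_of_ne hik hne
  have hjn := j.isLt
  have hin := i.isLt
  have hvi : v i = u j := by rw [heq, Equiv.Perm.mul_apply, Equiv.swap_apply_left]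
  have hvj : v j = u i := by rw [heq, Equiv.Perm.mul_apply, Equiv.swap_apply_right]
  have hvp : ∀ p : Fin n, p ≠ i → p ≠ j → v p = u p := by
    intro p h1 h2
    rw [heq, Equiv.Perm.mul_apply, Equiv.swap_apply_of_ne_of_ne h1 h2]
  have huj : (u j : ℕ) = n - 1 - (i : ℕ) := by
    rw [← hvi, hC1 i hilt, w0_apply_val]
  have hui : (u i : ℕ) + k < n := by
    rw [← hvj]; exact vals_high v k hC1 j (by omega)
  by_cases hcase : (i : ℕ) + 1 < k
  · -- intermediate position i+1
    have hq : (i : ℕ) + 1 < n := by omega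
    have hqi : (⟨(i : ℕ) + 1, hq⟩ : Fin n) ≠ i := by
      intro hh
      have : (i : ℕ) + 1 = (i : ℕ) := congrArg Fin.val hh
      omega
    have hqj : (⟨(i : ℕ) + 1, hq⟩ : Fin n) ≠ j := by
      intro hh
      have : (i : ℕ) + 1 = (j : ℕ) := congrArg Fin.val hh
      omega
    have huq : (u ⟨(i : ℕ) + 1, hq⟩ : ℕ) = n - 1 - ((i : ℕ) + 1) := by
      rw [← hvp _ hqi hqj, hC1 _ (show (i : ℕ) + 1 < k from hcase), w0_apply_val]
    refine hmid ⟨(i : ℕ) + 1, hq⟩ (Fin.lt_def.mpr (Nat.lt_succ_self _))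
      (Fin.lt_def.mpr (show (i : ℕ) + 1 < (j : ℕ) by omega)) ⟨?_, ?_⟩
    · exact Fin.lt_def.mpr (show (u i : ℕ) < (u ⟨(i : ℕ) + 1, hq⟩ : ℕ) by omega)
    · exact Fin.lt_def.mpr (show (u ⟨(i : ℕ) + 1, hq⟩ : ℕ) < (u j : ℕ) by omega)
  · -- k = i + 1, intermediate position k
    have hk1 : k = (i : ℕ) + 1 := by omega
    have hqi : (⟨k, hkn⟩ : Fin n) ≠ i := by
      intro hh
      have : k = (i : ℕ) := congrArg Fin.val hh
      omega
    have hqj : (⟨k, hkn⟩ : Fin n) ≠ j := by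
      intro hh
      have : k = (j : ℕ) := congrArg Fin.val hh
      omega
    have hvq : (v ⟨k, hkn⟩ : ℕ) + k < n := vals_high v k hC1 ⟨k, hkn⟩ le_rfl
    have huqv : (u ⟨k, hkn⟩ : ℕ) = (v ⟨k, hkn⟩ : ℕ) := by
      rw [hvp _ hqi hqj]
    have hlow : (u i : ℕ) < (v ⟨k, hkn⟩ : ℕ) := by
      rcases hvk with h1 | h1
      · have hvqv : (v ⟨k, hkn⟩ : ℕ) = n - 1 - k := by
          rw [h1, w0_apply_val]
        have hne2 : v j ≠ v ⟨k, hkn⟩ := by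
          intro hh
          have h7 := v.injective hh
          have : (j : ℕ) = k := congrArg Fin.val h7
          omega
        have hne3 : (u i : ℕ) ≠ (v ⟨k, hkn⟩ : ℕ) := by
          rw [← hvj]
          exact fun hh => hne2 (Fin.ext hh)
        omega
      · omega
    refine hmid ⟨k, hkn⟩ (Fin.lt_def.mpr (show (i : ℕ) < k from hilt))
      (Fin.lt_def.mpr (show k < (j : ℕ) from hkj)) ⟨?_, ?_⟩
    · exact Fin.lt_def.mpr (show (u i : ℕ) < (u ⟨k, hkn⟩ : ℕ) by omega)
    · exact Fin.lt_def.mpr (show (u ⟨k, hkn⟩ : ℕ) < (u j : ℕ) by omega)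

lemma key (n m : ℕ) (w : Perm' n) (γ : LabeledChain n m w (w0 n)) (hγ : γ.Increasing) :
    ∀ d t : ℕ, m - t ≤ d →
      (∀ (h : t < m), ∀ p : Fin n, (p : ℕ) < (γ.lab ⟨t, h⟩).1 →
          γ.c ⟨t, by omega⟩ p = w0 n p) ∧
      (∀ (h : t < m), ∀ i j : Fin n, i < j →
          (∀ q : Fin n, i < q → q < j →
            ¬(γ.c ⟨t, by omega⟩ i < γ.c ⟨t, by omega⟩ q ∧
              γ.c ⟨t, by omega⟩ q < γ.c ⟨t, by omega⟩ j)) →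
          γ.c ⟨t + 1, by omega⟩ = γ.c ⟨t, by omega⟩ * Equiv.swap i j →
          (i : ℕ) ≤ (γ.lab ⟨t, h⟩).1 → (γ.lab ⟨t, h⟩).1 < (j : ℕ) →
          (γ.lab ⟨t, h⟩).2 = (γ.c ⟨t, by omega⟩ i : ℕ) →
          (i : ℕ) = (γ.lab ⟨t, h⟩).1) := by
  intro d
  induction d with
  | zero =>
    intro t ht
    exact ⟨fun h => absurd h (by omega), fun h => absurd h (by omega)⟩
  | succ d ih =>
    intro t ht
    by_cases htm : t < m
    · obtain ⟨Q1, R1⟩ := ih (t + 1) (by omega)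
      -- all positions below the current label are already finished at time t+1
      have hC1 : ∀ p : Fin n, (p : ℕ) < (γ.lab ⟨t, htm⟩).1 →
          γ.c ⟨t + 1, by omega⟩ p = w0 n p := by
        intro p hp
        by_cases h2 : t + 1 < m
        · apply Q1 h2 p
          have hlex := hγ ⟨t, htm⟩ ⟨t + 1, h2⟩ (Fin.lt_def.mpr (Nat.lt_succ_self t))
          unfold lexLt at hlex
          omega
        · have hm : t + 1 = m := by omega
          have hc : (⟨t + 1, by omega⟩ : Fin (m + 1)) = Fin.last m := Fin.ext hm
          rw [hc, γ.c_last]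
      have hkn : (γ.lab ⟨t, htm⟩).1 < n → True := fun _ => trivial
      -- the value at position k at time t+1 : either finished or bigger than b
      have hvkOr : ∀ (hkn : (γ.lab ⟨t, htm⟩).1 < n),
          γ.c ⟨t + 1, by omega⟩ ⟨(γ.lab ⟨t, htm⟩).1, hkn⟩ =
            w0 n ⟨(γ.lab ⟨t, htm⟩).1, hkn⟩ ∨
          (γ.lab ⟨t, htm⟩).2 <
            (γ.c ⟨t + 1, by omega⟩ ⟨(γ.lab ⟨t, htm⟩).1, hkn⟩ : ℕ) := by
        intro hkn
        by_cases h2 : t + 1 < m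
        · have hlex := hγ ⟨t, htm⟩ ⟨t + 1, h2⟩ (Fin.lt_def.mpr (Nat.lt_succ_self t))
          unfold lexLt at hlex
          by_cases hkk : (γ.lab ⟨t, htm⟩).1 < (γ.lab ⟨t + 1, h2⟩).1
          · exact Or.inl (Q1 h2 _ hkk)
          · right
            have hstep1 : IsLabeledCover (γ.c ⟨t + 1, by omega⟩) (γ.c ⟨t + 2, by omega⟩)
                (γ.lab ⟨t + 1, h2⟩).1 (γ.lab ⟨t + 1, h2⟩).2 := γ.step ⟨t + 1, h2⟩
            obtain ⟨i1, j1, hij1, hval1, hmid1, heq1, hik1, hkj1, hb1'⟩ := hstep1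
            have hi1 : (i1 : ℕ) = (γ.lab ⟨t + 1, h2⟩).1 :=
              R1 h2 i1 j1 hij1 hmid1 heq1 hik1 hkj1 hb1'
            have hi1' : i1 = ⟨(γ.lab ⟨t, htm⟩).1, hkn⟩ :=
              Fin.ext (show (i1 : ℕ) = (γ.lab ⟨t, htm⟩).1 by omega)
            rw [← hi1', ← hb1']
            omega
        · have hm : t + 1 = m := by omega
          have hc : (⟨t + 1, by omega⟩ : Fin (m + 1)) = Fin.last m := Fin.ext hm
          rw [hc, γ.c_last]
          exact Or.inl rfl
      have hstep0 : IsLabeledCover (γ.c ⟨t, by omega⟩) (γ.c ⟨t + 1, by omega⟩)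
          (γ.lab ⟨t, htm⟩).1 (γ.lab ⟨t, htm⟩).2 := γ.step ⟨t, htm⟩
      refine ⟨?_, ?_⟩
      · intro h p hp
        have hp' : (p : ℕ) < (γ.lab ⟨t, htm⟩).1 := hp
        obtain ⟨i0, j0, hij0, hval0, hmid0, heq0, hik0, hkj0, hb0⟩ := hstep0
        have hi0 : (i0 : ℕ) = (γ.lab ⟨t, htm⟩).1 :=
          step_main (γ.c ⟨t, by omega⟩) (γ.c ⟨t + 1, by omega⟩) _ _ i0 j0 hij0 hmid0 heq0
            hik0 hkj0 hb0 hC1 (by omega) (hvkOr (by omega))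
        have hp1 : p ≠ i0 := by
          intro hh
          rw [hh] at hp'
          omega
        have hp2 : p ≠ j0 := by
          intro hh
          rw [hh] at hp'
          omega
        have hfix : γ.c ⟨t + 1, by omega⟩ p = γ.c ⟨t, by omega⟩ p := by
          rw [heq0, Equiv.Perm.mul_apply, Equiv.swap_apply_of_ne_of_ne hp1 hp2]
        rw [← hfix]
        exact hC1 p hp'
      · intro h i j hij hmid heq hik hkj hb
        exact step_main (γ.c ⟨t, by omega⟩) (γ.c ⟨t + 1, by omega⟩) _ _ i j hij hmid heq
          hik hkj hb hC1 (by omega) (hvkOr (by omega))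
    · exact ⟨fun h => absurd h htm, fun h => absurd h htm⟩

/-- In any increasing chain from `w` to `w₀`, every labeled cover
`u →^{(k,b)} v` satisfies `u⁻¹v = (k,l)` for some `l > k`; in particular `b = u(k)`. -/
theorem increasing_chain_label_property (n m : ℕ) (w : Perm' n)
    (γ : LabeledChain n m w (w0 n)) (hγ : γ.Increasing) (i : Fin m) :
    ∃ k l : Fin n, (k : ℕ) = (γ.lab i).1 ∧ k < l ∧
      γ.c i.succ = γ.c i.castSucc * Equiv.swap k l ∧
      (γ.lab i).2 = (γ.c i.castSucc k : ℕ) := by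
  obtain ⟨i0, j0, hij0, hval0, hmid0, heq0, hik0, hkj0, hb0⟩ := γ.step i
  have h2 := (key n m w γ hγ m (i : ℕ) (by omega)).2
  have hi0 : (i0 : ℕ) = (γ.lab i).1 :=
    h2 i.isLt i0 j0 hij0 hmid0 heq0 hik0 hkj0 hb0
  exact ⟨i0, j0, hi0, hij0, heq0, hb0⟩
end
end

section
/- For every w ∈ Σ_n, every monomial x₁^{α₁}⋯x_n^{α_n} appearing with nonzero coefficient in the Schubert polynomial S_w satisfies α_i ≤ n−i for all i; that is, every monomial of S_w divides x^δ. Consequently S_w is its own normal form modulo the ideal generated by the elementary symmetric polynomials, with respect to the degree reverse lexicographic term order with x₁ < ⋯ < x_n. -/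
open MvPolynomial

noncomputable section

/-!
The monomials of `S_{w₀} = x^δ` divide `x^δ`, and this bound survives each divided difference
`∂_i`: the degrees of `f - s_i f` in `x_i` and `x_{i+1}` are at most `max (δ_i) (δ_{i+1}) = δ_i`,
and dividing by `x_i - x_{i+1}` lowers both by one, to at most `δ_i - 1 ≤ δ_i` and `δ_{i+1}`.
Every `w ≠ w₀` has an ascent `i`, so `S_w = ∂_i S_{w s_i}` with `ℓ(w s_i) > ℓ(w)`, and descending
induction on `ℓ(w)` bounds every Schubert polynomial.
-/

namespace MvPolynomial

variable {R σ : Type*} [CommRing R]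

theorem degreeOf_prod_X_pow_le [Fintype σ] [DecidableEq σ] (e : σ → ℕ) (k : σ) :
    degreeOf k (∏ i, X i ^ e i : MvPolynomial σ R) ≤ e k := by
  have hpow (i : σ) : degreeOf k (X i ^ e i : MvPolynomial σ R) ≤ Finsupp.single i (e i) k := by
    refine degreeOf_le_iff.mpr fun d hd => ?_
    rw [X_pow_eq_monomial] at hd
    rw [Finset.mem_singleton.mp (support_monomial_subset hd)]
  calc degreeOf k (∏ i, X i ^ e i : MvPolynomial σ R)
      ≤ ∑ i, degreeOf k (X i ^ e i : MvPolynomial σ R) := degreeOf_prod_le k _ _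
    _ ≤ ∑ i, Finsupp.single i (e i) k := Finset.sum_le_sum fun i _ => hpow i
    _ = e k := by simp [Finsupp.single_apply]

theorem degreeOf_rename_swap [DecidableEq σ] (i j k : σ) (f : MvPolynomial σ R) :
    degreeOf k (rename (Equiv.swap i j) f) = degreeOf (Equiv.swap i j k) f := by
  conv_lhs => rw [← Equiv.swap_apply_self i j k]
  exact degreeOf_rename_of_injective (Equiv.injective _) _

theorem degreeOf_X_sub_X_left [Nontrivial R] {i j : σ} (hij : i ≠ j) :
    degreeOf i (X i - X j : MvPolynomial σ R) = 1 := by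
  rw [sub_eq_add_neg, degreeOf_add_eq_of_degreeOf_lt] <;>
    simp [degreeOf_neg, degreeOf_X_of_ne hij]

variable [IsDomain R]

theorem degreeOf_le_of_sub_rename_swap_eq_mul [DecidableEq σ] {i j : σ} (hij : i ≠ j)
    {f g : MvPolynomial σ R} (hfg : f - rename (Equiv.swap i j) f = (X i - X j) * g)
    (b : σ → ℕ) (hf : ∀ k, degreeOf k f ≤ b k) (hbi : b i ≤ b j + 1) (hbj : b j ≤ b i + 1)
    (k : σ) : degreeOf k g ≤ b k := by
  rcases eq_or_ne g 0 with rfl | hg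
  · simp
  have hXX : (X i - X j : MvPolynomial σ R) ≠ 0 := by
    rw [sub_ne_zero]; exact (X_injective (R := R)).ne hij
  have hdiff : degreeOf k (X i - X j : MvPolynomial σ R) + degreeOf k g ≤
      max (b k) (b (Equiv.swap i j k)) := by
    rw [← degreeOf_mul_eq hXX hg, ← hfg]
    refine (degreeOf_sub_le k _ _).trans (max_le_max (hf k) ?_)
    rw [degreeOf_rename_swap]; exact hf _
  rcases eq_or_ne k i with rfl | hki
  · rw [degreeOf_X_sub_X_left hij, Equiv.swap_apply_left] at hdiff; omega
  rcases eq_or_ne k j with rfl | hkj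
  · rw [← neg_sub, degreeOf_neg, degreeOf_X_sub_X_left hij.symm,
      Equiv.swap_apply_right] at hdiff
    omega
  · rw [Equiv.swap_apply_of_ne_of_ne hki hkj, max_self] at hdiff; omega

end MvPolynomial

open MvPolynomial

section Permutations

variable {n : ℕ}

theorem swap_apply_lt_swap_apply_of_lt {a b p q : Fin n} (hab : (b : ℕ) = a + 1) (hpq : p < q)
    (hne : (p, q) ≠ (a, b)) : Equiv.swap a b p < Equiv.swap a b q := by
  simp only [ne_eq, Prod.mk.injEq, Fin.ext_iff] at hne
  rw [Fin.lt_def] at hpq ⊢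
  rw [Equiv.swap_apply_def, Equiv.swap_apply_def]
  split_ifs <;> simp only [Fin.ext_iff] at * <;> omega

theorem invLength_lt_invLength_mul_swap {w : Perm' n} {a b : Fin n} (hab : (b : ℕ) = a + 1)
    (hw : w a < w b) : invLength w < invLength (w * Equiv.swap a b) := by
  let swapBoth : Fin n × Fin n ↪ Fin n × Fin n :=
    (Equiv.prodCongr (Equiv.swap a b) (Equiv.swap a b)).toEmbedding
  have hlt : a < b := by rw [Fin.lt_def]; omega
  unfold invLength
  rw [← Finset.card_map swapBoth]
  refine Finset.card_lt_card (Finset.ssubset_iff_of_subset ?_ |>.mpr ⟨(a, b), ?_, ?_⟩)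
  · intro x
    simp only [Finset.mem_map, Finset.mem_filter, Finset.mem_univ, true_and]
    rintro ⟨⟨p, q⟩, ⟨hpq, hwpq⟩, rfl⟩
    have hne : (p, q) ≠ (a, b) := by rintro ⟨⟩; exact hwpq.not_gt hw
    refine ⟨swap_apply_lt_swap_apply_of_lt hab hpq hne, ?_⟩
    simpa [swapBoth] using hwpq
  · refine Finset.mem_filter.mpr ⟨Finset.mem_univ _, hlt, ?_⟩
    simpa using hw
  · simp only [Finset.mem_map, Finset.mem_filter, Finset.mem_univ, true_and, not_exists, not_and]
    rintro ⟨p, q⟩ ⟨hpq, -⟩ hpqab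
    simp only [swapBoth, Equiv.coe_toEmbedding, Equiv.prodCongr_apply, Prod.map, Prod.mk.injEq,
      Equiv.swap_apply_eq_iff, Equiv.swap_apply_left, Equiv.swap_apply_right] at hpqab
    obtain ⟨rfl, rfl⟩ := hpqab
    exact hpq.not_gt hlt

theorem invLength_le_mul_self (w : Perm' n) : invLength w ≤ n * n := by
  unfold invLength
  exact (Finset.card_filter_le _ _).trans (by simp)

theorem eq_w0_of_forall_not_lt_succ {w : Perm' n}
    (hw : ∀ (i : ℕ) (h : i + 1 < n), ¬ w ⟨i, by omega⟩ < w ⟨i + 1, h⟩) : w = w0 n := by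
  rcases n with _ | m
  · exact Subsingleton.elim _ _
  have hanti : StrictAnti w := Fin.strictAnti_iff_succ_lt.mpr fun i =>
    (not_lt.mp (hw i (Nat.succ_lt_succ i.isLt))).lt_of_ne (w.injective.ne Fin.castSucc_lt_succ.ne')
  have hmono : StrictMono (w ∘ Fin.rev) := hanti.comp Fin.rev_strictAnti
  have hid := congrArg (⇑) (Subsingleton.elim
    (hmono.orderIsoOfSurjective _ (w.surjective.comp Fin.rev_surjective)) (OrderIso.refl _))
  refine Equiv.ext fun x => ?_
  simpa [w0] using congrFun hid (Fin.rev x)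

end Permutations

theorem degreeOf_schubert_le {n : ℕ} {S : Perm' n → MvPolynomial (Fin n) ℤ}
    (hS : IsSchubertFamily n S) (w : Perm' n) (k : Fin n) :
    degreeOf k (S w) ≤ n - 1 - (k : ℕ) := by
  induction hm : n * n - invLength w using Nat.strong_induction_on generalizing w k with
  | _ m ih =>
  by_cases hasc : ∃ (i : ℕ) (h : i + 1 < n), w ⟨i, by omega⟩ < w ⟨i + 1, h⟩
  · obtain ⟨i, h, hlt⟩ := hasc
    set s : Perm' n := Equiv.swap ⟨i, by omega⟩ ⟨i + 1, h⟩
    have hlen : invLength w < invLength (w * s) := invLength_lt_invLength_mul_swap rfl hlt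
    have hbound := invLength_le_mul_self (w * s)
    have hdiv := hS.2 (w * s) i h (by rwa [Equiv.mul_swap_mul_self])
    rw [Equiv.mul_swap_mul_self] at hdiv
    exact degreeOf_le_of_sub_rename_swap_eq_mul (by simp [Fin.ext_iff]) hdiv
      (fun j => n - 1 - (j : ℕ)) (fun j => ih _ (by omega) _ j rfl) (by dsimp only; omega)
      (by dsimp only; omega) k
  · rw [eq_w0_of_forall_not_lt_succ fun i h hlt => hasc ⟨i, h, hlt⟩, hS.1]
    exact degreeOf_prod_X_pow_le _ k

/-- Every monomial of a Schubert polynomial `S_w` divides `x^δ`;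
consequently `S_w` is its own normal form modulo the ideal of elementary symmetric
polynomials. -/
theorem schubert_is_own_normal_form (n : ℕ)
    (S : Perm' n → MvPolynomial (Fin n) ℤ) (hS : IsSchubertFamily n S)
    (w : Perm' n) :
    (∀ d ∈ (S w).support, ∀ i : Fin n, d i ≤ n - 1 - (i : ℕ)) ∧
    IsNormalForm n (S w) (S w) := by
  have hsupp : ∀ d ∈ (S w).support, ∀ i : Fin n, d i ≤ n - 1 - (i : ℕ) :=
    fun d hd i => degreeOf_le_iff.mp (degreeOf_schubert_le hS w i) d hd
  exact ⟨hsupp, by rw [sub_self]; exact (symIdeal n).zero_mem, hsupp⟩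
end
end
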